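/- Let (u, v, w) be a smooth solution of (KB) and (φ, ψ, θ) a smooth solution of the adjoint system (AKB) on ℝ². Define Cˣ = (3/2)·uₜφu + uₜψv + uₜθw − (1/4)uₜθₓₓ + vₜφ + (1/2)vₜψu + wₜψ + (1/2)wₜθu + (1/4)uₓₜθₓ − (1/4)uₓₓₜθ and Cᵗ = −(3/2)φu·uₓ − φvₓ − ψv·uₓ − (1/2)ψu·vₓ − ψwₓ + (1/4)θ·uₓₓₓ − θw·uₓ − (1/2)θu·wₓ (subscripts denote partial derivatives). Then ∂ₓCˣ + ∂ₜCᵗ = 0 identically on ℝ². -/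

import Mathlib

/-- Partial derivative with respect to the first (space) variable. -/
noncomputable def pdx (f : ℝ → ℝ → ℝ) (x t : ℝ) : ℝ := deriv (fun y => f y t) x

/-- Partial derivative with respect to the second (time) variable. -/
noncomputable def pdt (f : ℝ → ℝ → ℝ) (x t : ℝ) : ℝ := deriv (fun s => f x s) t

/-- The three-field Kaup–Boussinesq system (KB) holds for `(u,v,w)` at the point `(x,t)`:
`∂ₜu = (3/2)u∂ₓu + ∂ₓv`, `∂ₜv = v∂ₓu + (1/2)u∂ₓv + ∂ₓw`,
`∂ₜw = −(1/4)∂ₓ³u + w∂ₓu + (1/2)u∂ₓw`. -/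
def KBAt (u v w : ℝ → ℝ → ℝ) (x t : ℝ) : Prop :=
  pdt u x t = 3/2 * u x t * pdx u x t + pdx v x t ∧
  pdt v x t = v x t * pdx u x t + 1/2 * u x t * pdx v x t + pdx w x t ∧
  pdt w x t = -(1/4) * pdx (pdx (pdx u)) x t + w x t * pdx u x t
    + 1/2 * u x t * pdx w x t

/-- `f : ℝ × ℝ → ℝ` (curried) is smooth in both variables jointly. -/
def Smooth2 (f : ℝ → ℝ → ℝ) : Prop := ContDiff ℝ (⊤ : ℕ∞) (fun p : ℝ × ℝ => f p.1 p.2)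

/-- The adjoint system (AKB) of the three-field Kaup–Boussinesq system holds for
`(φ,ψ,θ)` (relative to the fields `(u,v,w)`) at the point `(x,t)`:
`∂ₜφ = (1/2)ψ∂ₓv + (1/2)θ∂ₓw + (3/2)u∂ₓφ + v∂ₓψ + w∂ₓθ − (1/4)∂ₓ³θ`,
`∂ₜψ = ∂ₓφ + (1/2)u∂ₓψ − (1/2)ψ∂ₓu`,
`∂ₜθ = ∂ₓψ + (1/2)u∂ₓθ − (1/2)θ∂ₓu`. -/
def AKBAt (φ ψ θ u v w : ℝ → ℝ → ℝ) (x t : ℝ) : Prop :=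
  pdt φ x t = 1/2 * ψ x t * pdx v x t + 1/2 * θ x t * pdx w x t
    + 3/2 * u x t * pdx φ x t + v x t * pdx ψ x t + w x t * pdx θ x t
    - 1/4 * pdx (pdx (pdx θ)) x t ∧
  pdt ψ x t = pdx φ x t + 1/2 * u x t * pdx ψ x t - 1/2 * ψ x t * pdx u x t ∧
  pdt θ x t = pdx ψ x t + 1/2 * u x t * pdx θ x t - 1/2 * θ x t * pdx u x t


section Aux
variable {f : ℝ → ℝ → ℝ}

lemma Smooth2.hdx (hf : Smooth2 f) (x t : ℝ) :
    HasDerivAt (fun y => f y t) (pdx f x t) x := by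
  have h : DifferentiableAt ℝ (fun y => f y t) x :=
    ((hf.differentiable (by simp)).comp
      (differentiable_id.prodMk (differentiable_const t))).differentiableAt
  exact h.hasDerivAt

lemma Smooth2.hdt (hf : Smooth2 f) (x t : ℝ) :
    HasDerivAt (fun s => f x s) (pdt f x t) t := by
  have h : DifferentiableAt ℝ (fun s => f x s) t :=
    ((hf.differentiable (by simp)).comp
      ((differentiable_const x).prodMk differentiable_id)).differentiableAt
  exact h.hasDerivAt

lemma pdx_eq_fderiv (hf : Smooth2 f) (x t : ℝ) :
    pdx f x t = fderiv ℝ (fun p : ℝ × ℝ => f p.1 p.2) (x, t) (1, 0) := by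
  have hF : HasFDerivAt (fun p : ℝ × ℝ => f p.1 p.2)
      (fderiv ℝ (fun p : ℝ × ℝ => f p.1 p.2) (x, t)) (x, t) :=
    ((hf.differentiable (by simp)) (x, t)).hasFDerivAt
  have hc : HasDerivAt (fun y : ℝ => ((y, t) : ℝ × ℝ)) ((1 : ℝ), (0 : ℝ)) x :=
    (hasDerivAt_id x).prodMk (hasDerivAt_const x t)
  exact (hF.comp_hasDerivAt x hc).deriv

lemma pdt_eq_fderiv (hf : Smooth2 f) (x t : ℝ) :
    pdt f x t = fderiv ℝ (fun p : ℝ × ℝ => f p.1 p.2) (x, t) (0, 1) := by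
  have hF : HasFDerivAt (fun p : ℝ × ℝ => f p.1 p.2)
      (fderiv ℝ (fun p : ℝ × ℝ => f p.1 p.2) (x, t)) (x, t) :=
    ((hf.differentiable (by simp)) (x, t)).hasFDerivAt
  have hc : HasDerivAt (fun s : ℝ => ((x, s) : ℝ × ℝ)) ((0 : ℝ), (1 : ℝ)) t :=
    (hasDerivAt_const t x).prodMk (hasDerivAt_id t)
  exact (hF.comp_hasDerivAt t hc).deriv

lemma Smooth2.px (hf : Smooth2 f) : Smooth2 (_root_.pdx f) := by
  have h : (fun p : ℝ × ℝ => pdx f p.1 p.2)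
      = fun p : ℝ × ℝ => fderiv ℝ (fun q : ℝ × ℝ => f q.1 q.2) p (1, 0) := by
    funext p
    exact pdx_eq_fderiv hf p.1 p.2
  rw [Smooth2, h]
  exact (hf.fderiv_right (by simp)).clm_apply contDiff_const

lemma Smooth2.pt (hf : Smooth2 f) : Smooth2 (_root_.pdt f) := by
  have h : (fun p : ℝ × ℝ => pdt f p.1 p.2)
      = fun p : ℝ × ℝ => fderiv ℝ (fun q : ℝ × ℝ => f q.1 q.2) p (0, 1) := by
    funext p
    exact pdt_eq_fderiv hf p.1 p.2
  rw [Smooth2, h]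
  exact (hf.fderiv_right (by simp)).clm_apply contDiff_const

lemma pdt_pdx_comm (hf : Smooth2 f) (x t : ℝ) :
    pdt (pdx f) x t = pdx (pdt f) x t := by
  have h1 := pdt_eq_fderiv hf.px x t
  have h2 := pdx_eq_fderiv hf.pt x t
  rw [h1, h2]
  have e1 : (fun p : ℝ × ℝ => pdx f p.1 p.2)
      = fun p : ℝ × ℝ => fderiv ℝ (fun q : ℝ × ℝ => f q.1 q.2) p (1, 0) := by
    funext p; exact pdx_eq_fderiv hf p.1 p.2
  have e2 : (fun p : ℝ × ℝ => pdt f p.1 p.2)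
      = fun p : ℝ × ℝ => fderiv ℝ (fun q : ℝ × ℝ => f q.1 q.2) p (0, 1) := by
    funext p; exact pdt_eq_fderiv hf p.1 p.2
  rw [e1, e2]
  set F := fun q : ℝ × ℝ => f q.1 q.2 with hF
  have hdG : DifferentiableAt ℝ (fderiv ℝ F) (x, t) :=
    ((hf.fderiv_right (m := 1) (by exact WithTop.coe_le_coe.mpr le_top)).differentiable one_ne_zero) (x, t)
  have key1 : fderiv ℝ (fun p : ℝ × ℝ => fderiv ℝ F p (1, 0)) (x, t)
      = (fderiv ℝ (fderiv ℝ F) (x, t)).flip (1, 0) := by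
    rw [fderiv_clm_apply hdG (differentiableAt_const _)]
    simp
  have key2 : fderiv ℝ (fun p : ℝ × ℝ => fderiv ℝ F p (0, 1)) (x, t)
      = (fderiv ℝ (fderiv ℝ F) (x, t)).flip (0, 1) := by
    rw [fderiv_clm_apply hdG (differentiableAt_const _)]
    simp
  rw [key1, key2]
  simp only [ContinuousLinearMap.flip_apply]
  exact second_derivative_symmetric
    (fun y => ((hf.differentiable (by simp)) y).hasFDerivAt) hdG.hasFDerivAt _ _

lemma pdx_eqd {f : ℝ → ℝ → ℝ} {x t d e : ℝ}
    (h : HasDerivAt (fun y => f y t) d x) (he : d = e) : pdx f x t = e :=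
  he ▸ h.deriv

end Aux

/-- The conserved current component `Cˣ` associated with the time-translation
symmetry `V1 = ∂ₜ` via Ibragimov's conservation theorem. -/
noncomputable def Cx1 (u v w φ ψ θ : ℝ → ℝ → ℝ) (x t : ℝ) : ℝ :=
  3/2 * pdt u x t * φ x t * u x t + pdt u x t * ψ x t * v x t
    + pdt u x t * θ x t * w x t - 1/4 * pdt u x t * pdx (pdx θ) x t
    + pdt v x t * φ x t + 1/2 * pdt v x t * ψ x t * u x t
    + pdt w x t * ψ x t + 1/2 * pdt w x t * θ x t * u x t
    + 1/4 * pdx (pdt u) x t * pdx θ x t - 1/4 * pdx (pdx (pdt u)) x t * θ x t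

/-- The conserved current component `Cᵗ` associated with `V1 = ∂ₜ`. -/
noncomputable def Ct1 (u v w φ ψ θ : ℝ → ℝ → ℝ) (x t : ℝ) : ℝ :=
  -(3/2) * φ x t * u x t * pdx u x t - φ x t * pdx v x t
    - ψ x t * v x t * pdx u x t - 1/2 * ψ x t * u x t * pdx v x t
    - ψ x t * pdx w x t + 1/4 * θ x t * pdx (pdx (pdx u)) x t
    - θ x t * w x t * pdx u x t - 1/2 * θ x t * u x t * pdx w x t

/-- `(Cˣ, Cᵗ)` is a conserved current: `∂ₓCˣ + ∂ₜCᵗ = 0` on ℝ². -/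
theorem stmt_15 (u v w φ ψ θ : ℝ → ℝ → ℝ)
    (hu : Smooth2 u) (hv : Smooth2 v) (hw : Smooth2 w)
    (hφ : Smooth2 φ) (hψ : Smooth2 ψ) (hθ : Smooth2 θ)
    (hKB : ∀ x t : ℝ, KBAt u v w x t)
    (hAKB : ∀ x t : ℝ, AKBAt φ ψ θ u v w x t) :
    ∀ x t : ℝ, pdx (Cx1 u v w φ ψ θ) x t + pdt (Ct1 u v w φ ψ θ) x t = 0 := by
  intro x t
  -- function-level KB equations
  have hg1 : pdt u = fun a b => 3/2 * u a b * pdx u a b + pdx v a b :=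
    funext fun a => funext fun b => (hKB a b).1
  have hg2 : pdt v = fun a b =>
      v a b * pdx u a b + 1/2 * u a b * pdx v a b + pdx w a b :=
    funext fun a => funext fun b => (hKB a b).2.1
  have hg3 : pdt w = fun a b =>
      -(1/4) * pdx (pdx (pdx u)) a b + w a b * pdx u a b
        + 1/2 * u a b * pdx w a b :=
    funext fun a => funext fun b => (hKB a b).2.2
  -- x-derivatives of the time derivatives
  have e_uxt : ∀ a b : ℝ, pdx (pdt u) a b
      = 3/2 * pdx u a b * pdx u a b + 3/2 * u a b * pdx (pdx u) a b
        + pdx (pdx v) a b := by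
    intro a b
    rw [hg1]
    exact pdx_eqd
      (((HasDerivAt.const_mul (3/2 : ℝ) (hu.hdx a b)).mul (hu.px.hdx a b)).add
        (hv.px.hdx a b)) (by ring)
  have hg1x : pdx (pdt u) = fun a b =>
      3/2 * pdx u a b * pdx u a b + 3/2 * u a b * pdx (pdx u) a b
        + pdx (pdx v) a b :=
    funext fun a => funext fun b => e_uxt a b
  have e_uxxt : ∀ a b : ℝ, pdx (pdx (pdt u)) a b
      = 9/2 * pdx u a b * pdx (pdx u) a b
        + 3/2 * u a b * pdx (pdx (pdx u)) a b + pdx (pdx (pdx v)) a b := by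
    intro a b
    rw [hg1x]
    exact pdx_eqd
      ((((HasDerivAt.const_mul (3/2 : ℝ) (hu.px.hdx a b)).mul (hu.px.hdx a b)).add
          ((HasDerivAt.const_mul (3/2 : ℝ) (hu.hdx a b)).mul (hu.px.px.hdx a b))).add
        (hv.px.px.hdx a b)) (by ring)
  have hg2x : pdx (pdx (pdt u)) = fun a b =>
      9/2 * pdx u a b * pdx (pdx u) a b
        + 3/2 * u a b * pdx (pdx (pdx u)) a b + pdx (pdx (pdx v)) a b :=
    funext fun a => funext fun b => e_uxxt a b
  have e_uxxxt : pdx (pdx (pdx (pdt u))) x t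
      = 9/2 * pdx (pdx u) x t * pdx (pdx u) x t
        + 6 * pdx u x t * pdx (pdx (pdx u)) x t
        + 3/2 * u x t * pdx (pdx (pdx (pdx u))) x t
        + pdx (pdx (pdx (pdx v))) x t := by
    rw [hg2x]
    exact pdx_eqd
      ((((HasDerivAt.const_mul (9/2 : ℝ) (hu.px.hdx x t)).mul (hu.px.px.hdx x t)).add
          ((HasDerivAt.const_mul (3/2 : ℝ) (hu.hdx x t)).mul (hu.px.px.px.hdx x t))).add
        (hv.px.px.px.hdx x t)) (by ring)
  have e_vxt : pdx (pdt v) x t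
      = pdx v x t * pdx u x t + v x t * pdx (pdx u) x t
        + 1/2 * pdx u x t * pdx v x t + 1/2 * u x t * pdx (pdx v) x t
        + pdx (pdx w) x t := by
    rw [hg2]
    exact pdx_eqd
      ((((hv.hdx x t).mul (hu.px.hdx x t)).add
          ((HasDerivAt.const_mul (1/2 : ℝ) (hu.hdx x t)).mul (hv.px.hdx x t))).add
        (hw.px.hdx x t)) (by ring)
  have e_wxt : pdx (pdt w) x t
      = -(1/4) * pdx (pdx (pdx (pdx u))) x t + pdx w x t * pdx u x t
        + w x t * pdx (pdx u) x t + 1/2 * pdx u x t * pdx w x t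
        + 1/2 * u x t * pdx (pdx w) x t := by
    rw [hg3]
    exact pdx_eqd
      (((HasDerivAt.const_mul (-(1/4) : ℝ) (hu.px.px.px.hdx x t)).add
          ((hw.hdx x t).mul (hu.px.hdx x t))).add
        ((HasDerivAt.const_mul (1/2 : ℝ) (hu.hdx x t)).mul (hw.px.hdx x t)))
      (by ring)
  -- Clairaut exchanges
  have cl_u : pdt (pdx u) x t = pdx (pdt u) x t := pdt_pdx_comm hu x t
  have cl_v : pdt (pdx v) x t = pdx (pdt v) x t := pdt_pdx_comm hv x t
  have cl_w : pdt (pdx w) x t = pdx (pdt w) x t := pdt_pdx_comm hw x t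
  have cl_u3 : pdt (pdx (pdx (pdx u))) x t = pdx (pdx (pdx (pdt u))) x t := by
    rw [pdt_pdx_comm hu.px.px x t,
      show pdt (pdx (pdx u)) = pdx (pdt (pdx u)) from
        funext fun a => funext fun b => pdt_pdx_comm hu.px a b,
      show pdt (pdx u) = pdx (pdt u) from
        funext fun a => funext fun b => pdt_pdx_comm hu a b]
  -- assemble the derivative of Cx1 in x
  have HX :=
    (((((((((((HasDerivAt.const_mul (3/2 : ℝ) (hu.pt.hdx x t)).mul (hφ.hdx x t)).mul
        (hu.hdx x t)).add
      (((hu.pt.hdx x t).mul (hψ.hdx x t)).mul (hv.hdx x t))).add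
      (((hu.pt.hdx x t).mul (hθ.hdx x t)).mul (hw.hdx x t))).sub
      ((HasDerivAt.const_mul (1/4 : ℝ) (hu.pt.hdx x t)).mul (hθ.px.px.hdx x t))).add
      ((hv.pt.hdx x t).mul (hφ.hdx x t))).add
      (((HasDerivAt.const_mul (1/2 : ℝ) (hv.pt.hdx x t)).mul (hψ.hdx x t)).mul
        (hu.hdx x t))).add
      ((hw.pt.hdx x t).mul (hψ.hdx x t))).add
      (((HasDerivAt.const_mul (1/2 : ℝ) (hw.pt.hdx x t)).mul (hθ.hdx x t)).mul
        (hu.hdx x t))).add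
      ((HasDerivAt.const_mul (1/4 : ℝ) (hu.pt.px.hdx x t)).mul (hθ.px.hdx x t))).sub
      ((HasDerivAt.const_mul (1/4 : ℝ) (hu.pt.px.px.hdx x t)).mul (hθ.hdx x t))
  -- assemble the derivative of Ct1 in t
  have HT :=
    ((((((((HasDerivAt.const_mul (-(3/2) : ℝ) (hφ.hdt x t)).mul (hu.hdt x t)).mul
        (hu.px.hdt x t)).sub
      ((hφ.hdt x t).mul (hv.px.hdt x t))).sub
      (((hψ.hdt x t).mul (hv.hdt x t)).mul (hu.px.hdt x t))).sub
      (((HasDerivAt.const_mul (1/2 : ℝ) (hψ.hdt x t)).mul (hu.hdt x t)).mul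
        (hv.px.hdt x t))).sub
      ((hψ.hdt x t).mul (hw.px.hdt x t))).add
      ((HasDerivAt.const_mul (1/4 : ℝ) (hθ.hdt x t)).mul (hu.px.px.px.hdt x t))).sub
      (((hθ.hdt x t).mul (hw.hdt x t)).mul (hu.px.hdt x t)) |>.sub
      (((HasDerivAt.const_mul (1/2 : ℝ) (hθ.hdt x t)).mul (hu.hdt x t)).mul
        (hw.px.hdt x t))
  have ex : pdx (Cx1 u v w φ ψ θ) x t = _ := HX.deriv
  have et : pdt (Ct1 u v w φ ψ θ) x t = _ := HT.deriv
  rw [ex, et]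
  simp only [Pi.mul_apply, Pi.add_apply, Pi.sub_apply, cl_u, cl_v, cl_w, cl_u3, e_uxt, e_uxxt, e_uxxxt, e_vxt, e_wxt,
    (hKB x t).1, (hKB x t).2.1, (hKB x t).2.2,
    (hAKB x t).1, (hAKB x t).2.1, (hAKB x t).2.2]
  ring
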